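/- If H is a forest in which some connected component contains two distinct vertices of degree at least 3, then there exists a subdivision G of H that does not contain H as a subgraph. -/

import Mathlib

open SimpleGraph

/-- The degree of a vertex: the cardinality of its neighbor set. -/
noncomputable def degN (G : SimpleGraph ℕ) (v : ℕ) : ℕ := (G.neighborSet v).ncard

/-- An edge of `G` is *internal* if it lies on a cycle or on a path joining two
vertices of degree at least 3. -/
def InternalEdge (G : SimpleGraph ℕ) (e : Sym2 ℕ) : Prop :=
  e ∈ G.edgeSet ∧
    ((∃ (v : ℕ) (c : G.Walk v v), c.IsCycle ∧ e ∈ c.edges) ∨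
     (∃ (a b : ℕ) (p : G.Walk a b), p.IsPath ∧ e ∈ p.edges ∧
        3 ≤ degN G a ∧ 3 ≤ degN G b))

/-- `beta G` is the number of internal edges of `G`. -/
noncomputable def beta (G : SimpleGraph ℕ) : ℕ := {e | InternalEdge G e}.ncard

/-- `G` is obtained from `H` by one elementary subdivision: an edge `(u,v)` is
replaced by the two edges `(u,w)`, `(w,v)`, where `w` is a fresh (isolated)
vertex. -/
def ElemSubdiv (H G : SimpleGraph ℕ) : Prop :=
  ∃ u v w : ℕ, H.Adj u v ∧ H.neighborSet w = ∅ ∧ w ≠ u ∧ w ≠ v ∧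
    G = SimpleGraph.fromEdgeSet ((H.edgeSet \ {s(u, v)}) ∪ {s(u, w), s(w, v)})

/-- `G` is a subdivision of `H` if it is obtained from `H` by finitely many
elementary subdivisions. -/
def IsSubdivision (H G : SimpleGraph ℕ) : Prop := Relation.ReflTransGen ElemSubdiv H G

/-- `H` is (isomorphic to) a subgraph of `G`: there is an injective graph
homomorphism `H →g G`. -/
def SubgraphOf {V W : Type*} (H : SimpleGraph V) (G : SimpleGraph W) : Prop :=
  ∃ f : H →g G, Function.Injective f

/-- `H` is a topological minor of `G`: some subdivision of `H` is a subgraph of `G`. -/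
def TopMinorOf (H G : SimpleGraph ℕ) : Prop :=
  ∃ H' : SimpleGraph ℕ, IsSubdivision H H' ∧ SubgraphOf H' G

/-- `H` is a minor of `G`: there are pairwise disjoint nonempty connected branch
sets in `G`, one for each vertex of `H`, with an edge of `G` between the branch
sets of any two adjacent vertices of `H`. -/
def MinorOf {V W : Type*} (H : SimpleGraph V) (G : SimpleGraph W) : Prop :=
  ∃ φ : V → Set W,
    (∀ v, (φ v).Nonempty) ∧
    (∀ v, (G.induce (φ v)).Connected) ∧
    (∀ u v, u ≠ v → Disjoint (φ u) (φ v)) ∧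
    (∀ u v, H.Adj u v → ∃ a ∈ φ u, ∃ b ∈ φ v, G.Adj a b)

/-- The star `K_{1,r}` on vertex set `ℕ`: center `0` adjacent to `1, …, r`. -/
def starN (r : ℕ) : SimpleGraph ℕ :=
  SimpleGraph.fromEdgeSet {e | ∃ i : ℕ, 1 ≤ i ∧ i ≤ r ∧ e = s(0, i)}

/-!
Fix `n = dist_H(a, b)`. As long as two vertices of degree at least 3 are joined by a path of
length at most `n`, subdivide the first edge of that path with a fresh vertex. In a forest this
path is unique, so their distance grows, while the degrees, the reachability and the distances
of the old vertices never decrease and the new vertex has degree 2. Hence the potential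
`∑ (n + 1 - dist x y)` over such close pairs drops, and we reach a subdivision `G` in which any
two vertices of degree at least 3 are more than `n` apart. An injective homomorphism `H →g G`
would map `a` and `b` to two such vertices at distance at most `n`.
-/
namespace SimpleGraph

variable {V W : Type*}

theorem Reachable.of_forall_adj {G G' : SimpleGraph V} (h : ∀ ⦃a b⦄, G.Adj a b → G'.Reachable a b)
    {x y : V} (hxy : G.Reachable x y) : G'.Reachable x y := by
  obtain ⟨p⟩ := hxy
  induction p with
  | nil => rfl
  | cons hab _ ih => exact (h hab).trans ih

theorem Walk.exists_contraction {G : SimpleGraph V} {G' : SimpleGraph W} (f : V → W)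
    (hf : ∀ ⦃a b⦄, G.Adj a b → f a = f b ∨ G'.Adj (f a) (f b)) {x y : V} (p : G.Walk x y) :
    ∃ q : G'.Walk (f x) (f y), q.length ≤ p.length ∧
      ∀ a b, s(a, b) ∈ p.edges → f a = f b → q.length < p.length := by
  induction p with
  | nil => exact ⟨.nil, le_rfl, by simp⟩
  | @cons a c _ hac p ih =>
    obtain ⟨q, hle, hlt⟩ := ih
    rcases hf hac with heq | hadj
    · have hlen : (q.copy heq.symm rfl).length < (Walk.cons hac p).length := by
        simp only [Walk.length_copy, Walk.length_cons]
        omega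
      exact ⟨q.copy heq.symm rfl, hlen.le, fun _ _ _ _ => hlen⟩
    · refine ⟨.cons hadj q, by simpa using hle, fun a' b' he hab => ?_⟩
      rw [Walk.edges_cons, List.mem_cons] at he
      rcases he with he | he
      · rcases Sym2.eq_iff.mp he with ⟨rfl, rfl⟩ | ⟨rfl, rfl⟩
        · exact absurd hab hadj.ne
        · exact absurd hab.symm hadj.ne
      · simpa using hlt a' b' he hab

theorem finite_neighborSet_of_finite_edgeSet {G : SimpleGraph V} (hfin : G.edgeSet.Finite)
    (x : V) : (G.neighborSet x).Finite := by
  classical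
  have : Finite (G.incidenceSet x) := (hfin.subset (G.incidenceSet_subset x)).to_subtype
  exact Set.finite_coe_iff.mp (.of_equiv _ (G.incidenceSetEquivNeighborSet x))

theorem finite_support_of_finite_edgeSet {G : SimpleGraph V} (hfin : G.edgeSet.Finite) :
    G.support.Finite := by
  refine (hfin.biUnion fun e _ => ?_).subset fun x ⟨y, hxy⟩ =>
    Set.mem_biUnion (s := G.edgeSet) (t := fun e => {z | z ∈ e}) hxy (Sym2.mem_mk_left x y)
  induction e using Sym2.ind with
  | h a b => exact (Set.toFinite {a, b}).subset fun z hz => by simpa [Sym2.mem_iff] using hz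

theorem exists_notMem_neighborSet_eq_empty [Infinite V] {G : SimpleGraph V}
    (hfin : G.edgeSet.Finite) (T : Finset V) : ∃ w ∉ T, G.neighborSet w = ∅ := by
  obtain ⟨w, hw⟩ := ((finite_support_of_finite_edgeSet hfin).union T.finite_toSet).exists_notMem
  exact ⟨w, fun h => hw (.inr h), Set.eq_empty_of_forall_notMem fun y hy => hw (.inl ⟨y, hy⟩)⟩

def subdivideEdge (G : SimpleGraph V) (u v w : V) : SimpleGraph V :=
  fromEdgeSet ((G.edgeSet \ {s(u, v)}) ∪ {s(u, w), s(w, v)})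

section subdivideEdge

variable {G : SimpleGraph V} {u v w x : V}

theorem Adj.ne_of_neighborSet_eq_empty (h : G.Adj u v) (hw : G.neighborSet w = ∅) : u ≠ w := by
  rintro rfl
  exact (Set.eq_empty_iff_forall_notMem.mp hw) v h

theorem subdivideEdge_comm : G.subdivideEdge u v w = G.subdivideEdge v u w := by
  rw [subdivideEdge, subdivideEdge, Sym2.eq_swap (a := u), Sym2.eq_swap (a := u) (b := w),
    Sym2.eq_swap (a := w) (b := v), Set.pair_comm]

theorem subdivideEdge_eq_sup :
    G.subdivideEdge u v w = G.deleteEdges {s(u, v)} ⊔ edge u w ⊔ edge w v := by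
  ext a b
  simp only [subdivideEdge, fromEdgeSet_adj, sup_adj, deleteEdges_adj, edge_adj, Set.mem_union,
    Set.mem_sdiff, Set.mem_insert_iff, Set.mem_singleton_iff, mem_edgeSet, Sym2.eq_iff]
  constructor
  · rintro ⟨h, hab⟩
    tauto
  · rintro ((⟨h, h'⟩ | ⟨h, h'⟩) | ⟨h, h'⟩)
    · exact ⟨Or.inl ⟨h, h'⟩, h.ne⟩
    · tauto
    · tauto

theorem neighborSet_subdivideEdge_left (hu : u ≠ w) :
    (G.subdivideEdge u v w).neighborSet u = insert w (G.neighborSet u \ {v}) := by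
  ext y
  simp only [subdivideEdge, mem_neighborSet, fromEdgeSet_adj, Set.mem_union, Set.mem_sdiff,
    Set.mem_insert_iff, Set.mem_singleton_iff, mem_edgeSet, Sym2.eq_iff]
  by_cases hy : y = w
  · subst hy; simp [hu]
  · constructor
    · rintro ⟨h, -⟩; tauto
    · rintro (h | ⟨h, h'⟩)
      · exact absurd h hy
      · refine ⟨Or.inl ⟨h, ?_⟩, h.ne⟩
        rintro (⟨-, rfl⟩ | ⟨-, rfl⟩)
        exacts [h' rfl, h.ne rfl]

theorem neighborSet_subdivideEdge_of_ne (hu : x ≠ u) (hv : x ≠ v) (hw : x ≠ w) :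
    (G.subdivideEdge u v w).neighborSet x = G.neighborSet x := by
  ext y
  simp only [subdivideEdge, mem_neighborSet, fromEdgeSet_adj, Set.mem_union, Set.mem_sdiff,
    Set.mem_insert_iff, Set.mem_singleton_iff, mem_edgeSet, Sym2.eq_iff]
  constructor
  · rintro ⟨h, -⟩; tauto
  · intro h; exact ⟨Or.inl ⟨h, by tauto⟩, h.ne⟩

theorem neighborSet_subdivideEdge_self (huv : G.Adj u v) (hw : G.neighborSet w = ∅) :
    (G.subdivideEdge u v w).neighborSet w = {u, v} := by
  have hu := huv.ne_of_neighborSet_eq_empty hw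
  have hv := huv.symm.ne_of_neighborSet_eq_empty hw
  ext y
  simp only [subdivideEdge, mem_neighborSet, fromEdgeSet_adj, Set.mem_union, Set.mem_sdiff,
    Set.mem_insert_iff, Set.mem_singleton_iff, mem_edgeSet, Sym2.eq_iff]
  have hwy : ¬ G.Adj w y := fun h => (Set.eq_empty_iff_forall_notMem.mp hw) y h
  constructor
  · rintro ⟨h, -⟩; tauto
  · rintro (rfl | rfl)
    · exact ⟨by tauto, hu.symm⟩
    · exact ⟨by tauto, hv.symm⟩

theorem ncard_neighborSet_subdivideEdge_left (huv : G.Adj u v) (hw : G.neighborSet w = ∅)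
    (hfin : (G.neighborSet u).Finite) :
    ((G.subdivideEdge u v w).neighborSet u).ncard = (G.neighborSet u).ncard := by
  have hwu : w ∉ G.neighborSet u \ {v} := fun h =>
    h.1.symm.ne_of_neighborSet_eq_empty hw rfl
  rw [neighborSet_subdivideEdge_left (huv.ne_of_neighborSet_eq_empty hw),
    Set.ncard_insert_of_notMem hwu hfin.sdiff,
    Set.ncard_sdiff_singleton_add_one ((G.mem_neighborSet u v).mpr huv) hfin]

theorem ncard_neighborSet_subdivideEdge (huv : G.Adj u v) (hw : G.neighborSet w = ∅)
    (hfin : (G.neighborSet x).Finite) (hx : x ≠ w) :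
    ((G.subdivideEdge u v w).neighborSet x).ncard = (G.neighborSet x).ncard := by
  by_cases hxu : x = u
  · subst hxu
    exact ncard_neighborSet_subdivideEdge_left huv hw hfin
  by_cases hxv : x = v
  · subst hxv
    rw [subdivideEdge_comm]
    exact ncard_neighborSet_subdivideEdge_left huv.symm hw hfin
  rw [neighborSet_subdivideEdge_of_ne hxu hxv hx]

theorem ncard_neighborSet_subdivideEdge_self (huv : G.Adj u v) (hw : G.neighborSet w = ∅) :
    ((G.subdivideEdge u v w).neighborSet w).ncard = 2 := by
  rw [neighborSet_subdivideEdge_self huv hw, Set.ncard_pair huv.ne]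

theorem finite_edgeSet_subdivideEdge (hfin : G.edgeSet.Finite) :
    (G.subdivideEdge u v w).edgeSet.Finite := by
  rw [subdivideEdge, edgeSet_fromEdgeSet]
  exact (hfin.sdiff.union (Set.toFinite _)).sdiff

theorem Reachable.subdivideEdge (hu : u ≠ w) (hv : v ≠ w) {y : V} (h : G.Reachable x y) :
    (G.subdivideEdge u v w).Reachable x y := by
  refine h.of_forall_adj fun a b hab => ?_
  by_cases he : s(a, b) = s(u, v)
  · have huw : (G.subdivideEdge u v w).Adj u w := by simp [SimpleGraph.subdivideEdge, hu]
    have hwv : (G.subdivideEdge u v w).Adj w v := by simp [SimpleGraph.subdivideEdge, hv.symm]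
    rcases Sym2.eq_iff.mp he with ⟨rfl, rfl⟩ | ⟨rfl, rfl⟩
    · exact huw.reachable.trans hwv.reachable
    · exact hwv.reachable.symm.trans huw.reachable.symm
  · refine Adj.reachable ?_
    simp [SimpleGraph.subdivideEdge, hab, hab.ne, he]

theorem eq_or_adj_of_adj_subdivideEdge [DecidableEq V] (huv : G.Adj u v)
    (hw : G.neighborSet w = ∅) {a b : V} (h : (G.subdivideEdge u v w).Adj a b) :
    (if a = w then u else a) = (if b = w then u else b) ∨
      G.Adj (if a = w then u else a) (if b = w then u else b) := by
  simp only [subdivideEdge, fromEdgeSet_adj, Set.mem_union, Set.mem_sdiff, Set.mem_insert_iff,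
    Set.mem_singleton_iff, mem_edgeSet, Sym2.eq_iff] at h
  obtain ⟨⟨hab, -⟩ | (⟨rfl, rfl⟩ | ⟨rfl, rfl⟩) | ⟨rfl, rfl⟩ | ⟨rfl, rfl⟩, hne⟩ := h
  · simp [hab.ne_of_neighborSet_eq_empty hw, hab.symm.ne_of_neighborSet_eq_empty hw, hab]
  · simp
  · simp
  · simp [hne.symm, huv]
  · simp [hne, huv.symm]

theorem Reachable.of_subdivideEdge (huv : G.Adj u v) (hw : G.neighborSet w = ∅) {y : V}
    (hx : x ≠ w) (hy : y ≠ w) (h : (G.subdivideEdge u v w).Reachable x y) : G.Reachable x y := by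
  classical
  obtain ⟨p⟩ := h
  obtain ⟨q, -⟩ := p.exists_contraction _ fun _ _ => eq_or_adj_of_adj_subdivideEdge huv hw
  simpa [hx, hy] using q.reachable

theorem dist_le_length_of_walk_subdivideEdge (huv : G.Adj u v) (hw : G.neighborSet w = ∅)
    {y : V} (hx : x ≠ w) (hy : y ≠ w) (p : (G.subdivideEdge u v w).Walk x y) :
    G.dist x y ≤ p.length := by
  classical
  obtain ⟨q, hq, -⟩ := p.exists_contraction _ fun _ _ => eq_or_adj_of_adj_subdivideEdge huv hw
  simpa [hx, hy] using (dist_le q).trans hq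

theorem dist_lt_length_of_walk_subdivideEdge (huv : G.Adj u v) (hw : G.neighborSet w = ∅)
    {y : V} (hx : x ≠ w) (hy : y ≠ w) (p : (G.subdivideEdge u v w).Walk x y)
    (he : s(u, w) ∈ p.edges) : G.dist x y < p.length := by
  classical
  obtain ⟨q, -, hq⟩ := p.exists_contraction _ fun _ _ => eq_or_adj_of_adj_subdivideEdge huv hw
  simpa [hx, hy] using (dist_le q).trans_lt (hq u w he (by simp))

theorem dist_le_dist_subdivideEdge (huv : G.Adj u v) (hw : G.neighborSet w = ∅) {y : V}
    (hx : x ≠ w) (hy : y ≠ w) : G.dist x y ≤ (G.subdivideEdge u v w).dist x y := by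
  by_cases h : (G.subdivideEdge u v w).Reachable x y
  · obtain ⟨p, hp⟩ := h.exists_walk_length_eq_dist
    exact hp ▸ dist_le_length_of_walk_subdivideEdge huv hw hx hy p
  · rw [dist_eq_zero_of_not_reachable fun h' => h (h'.subdivideEdge
      (huv.ne_of_neighborSet_eq_empty hw) (huv.symm.ne_of_neighborSet_eq_empty hw))]
    exact Nat.zero_le _

theorem IsAcyclic.dist_lt_dist_subdivideEdge (hG : G.IsAcyclic) (huv : G.Adj u v)
    (hw : G.neighborSet w = ∅) {y : V} (hx : x ≠ w) (hy : y ≠ w) {P : G.Walk x y}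
    (hP : P.IsPath) (he : s(u, v) ∈ P.edges) :
    G.dist x y < (G.subdivideEdge u v w).dist x y := by
  classical
  have hu := huv.ne_of_neighborSet_eq_empty hw
  have hv := huv.symm.ne_of_neighborSet_eq_empty hw
  obtain ⟨p, hp⟩ := (P.reachable.subdivideEdge hu hv).exists_walk_length_eq_dist
  rw [← hp]
  by_cases huw : s(u, w) ∈ p.edges
  · exact dist_lt_length_of_walk_subdivideEdge huv hw hx hy p huw
  by_cases hvw : s(v, w) ∈ p.edges
  · have hp' : ∀ e ∈ p.edges, e ∈ (G.subdivideEdge v u w).edgeSet := by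
      intro e he'
      rw [← subdivideEdge_comm]
      exact p.edges_subset_edgeSet he'
    simpa using dist_lt_length_of_walk_subdivideEdge huv.symm hw hx hy (p.transfer _ hp')
      (by simpa using hvw)
  -- otherwise `p` is a walk of `G` avoiding `uv`, contradicting the uniqueness of paths
  have hE : ∀ e ∈ p.edges, e ∈ G.edgeSet ∧ e ≠ s(u, v) := by
    intro e he'
    have := p.edges_subset_edgeSet he'
    simp only [SimpleGraph.subdivideEdge, edgeSet_fromEdgeSet, Set.mem_sdiff, Set.mem_union,
      Set.mem_insert_iff, Set.mem_singleton_iff] at this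
    obtain ⟨⟨h, h'⟩ | rfl | rfl, -⟩ := this
    · exact ⟨h, h'⟩
    · exact absurd he' huw
    · exact absurd (Sym2.eq_swap ▸ he') hvw
  let q := p.transfer G fun e he' => (hE e he').1
  have hq : q.bypass = P :=
    congrArg Subtype.val ((hG.subsingleton_path x y).elim ⟨q.bypass, q.bypass_isPath⟩ ⟨P, hP⟩)
  have := q.edges_bypass_subset_edges (hq ▸ he)
  exact ((hE _ (by simpa [q] using this)).2 rfl).elim

theorem IsAcyclic.subdivideEdge (hG : G.IsAcyclic) (huv : G.Adj u v) (hw : G.neighborSet w = ∅) :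
    (G.subdivideEdge u v w).IsAcyclic := by
  classical
  have hu := huv.ne_of_neighborSet_eq_empty hw
  have hv := huv.symm.ne_of_neighborSet_eq_empty hw
  set D := G.deleteEdges {s(u, v)}
  have hDG : D ≤ G := deleteEdges_le _
  have hwD : ∀ {a b}, D.Adj a b → a ≠ w := fun h => (hDG h).ne_of_neighborSet_eq_empty hw
  have h1 : ¬ D.Reachable u w := by
    intro h
    obtain ⟨p⟩ := h.symm
    cases p with
    | nil => exact hu rfl
    | cons h _ => exact hwD h rfl
  have h2 : ¬ (D ⊔ edge u w).Reachable w v := by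
    rintro ⟨p⟩
    obtain ⟨q, -⟩ := p.exists_contraction (G' := D) (fun z => if z = w then u else z)
      fun a b hab => by
        rcases hab with hab | hab
        · exact .inr (by simpa [hwD hab, hwD hab.symm] using hab)
        · obtain ⟨⟨rfl, rfl⟩ | ⟨rfl, rfl⟩, -⟩ := (edge_adj _ _ _ _).mp hab <;> simp [hu]
    exact isAcyclic_iff_forall_adj_isBridge.mp hG huv (by simpa [hv] using q.reachable)
  rw [subdivideEdge_eq_sup]
  exact ((hG.anti hDG).sup_edge_of_not_reachable h1).sup_edge_of_not_reachable h2

end subdivideEdge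

end SimpleGraph

section subdivideEdge

variable {G : SimpleGraph ℕ} {u v w : ℕ}

theorem elemSubdiv_subdivideEdge (huv : G.Adj u v) (hw : G.neighborSet w = ∅) :
    ElemSubdiv G (G.subdivideEdge u v w) :=
  ⟨u, v, w, huv, hw, (huv.ne_of_neighborSet_eq_empty hw).symm,
    (huv.symm.ne_of_neighborSet_eq_empty hw).symm, rfl⟩

theorem degN_subdivideEdge (hfin : G.edgeSet.Finite) (huv : G.Adj u v) (hw : G.neighborSet w = ∅)
    {x : ℕ} (hx : x ≠ w) : degN (G.subdivideEdge u v w) x = degN G x :=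
  ncard_neighborSet_subdivideEdge huv hw (finite_neighborSet_of_finite_edgeSet hfin x) hx

theorem degN_subdivideEdge_self (huv : G.Adj u v) (hw : G.neighborSet w = ∅) :
    degN (G.subdivideEdge u v w) w = 2 :=
  ncard_neighborSet_subdivideEdge_self huv hw

end subdivideEdge

theorem degN_le_degN_of_injective {H G : SimpleGraph ℕ} (f : H →g G) (hf : Function.Injective f)
    (hG : G.edgeSet.Finite) (x : ℕ) : degN H x ≤ degN G (f x) :=
  Set.ncard_le_ncard_of_injOn f (fun _ hy => f.map_adj hy) hf.injOn
    (finite_neighborSet_of_finite_edgeSet hG _)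

def BranchVerticesFarApart (G : SimpleGraph ℕ) (n : ℕ) : Prop :=
  ∀ ⦃x y : ℕ⦄, x ≠ y → 3 ≤ degN G x → 3 ≤ degN G y → G.Reachable x y → n < G.dist x y

theorem not_subgraphOf_of_branchVerticesFarApart {H G : SimpleGraph ℕ} {a b : ℕ}
    (hG : G.edgeSet.Finite) (hfar : BranchVerticesFarApart G (H.dist a b)) (hab : a ≠ b)
    (ha : 3 ≤ degN H a) (hb : 3 ≤ degN H b) (hreach : H.Reachable a b) : ¬ SubgraphOf H G := by
  rintro ⟨f, hf⟩
  obtain ⟨p, hp⟩ := hreach.exists_walk_length_eq_dist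
  have hfar := hfar (hf.ne hab) (ha.trans (degN_le_degN_of_injective f hf hG a))
    (hb.trans (degN_le_degN_of_injective f hf hG b)) (hreach.map f)
  have := dist_le (p.map f)
  rw [Walk.length_map, hp] at this
  omega

section deficit

variable (n : ℕ)

-- Truncated subtraction: pairs more than `n` apart contribute nothing.
open scoped Classical in
noncomputable def pairDeficit (G : SimpleGraph ℕ) (x y : ℕ) : ℕ :=
  if x ≠ y ∧ 3 ≤ degN G x ∧ 3 ≤ degN G y ∧ G.Reachable x y then n + 1 - G.dist x y else 0

noncomputable def deficit (T : Finset ℕ) (G : SimpleGraph ℕ) : ℕ :=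
  ∑ x ∈ T, ∑ y ∈ T, pairDeficit n G x y

variable {n} {G : SimpleGraph ℕ} {T : Finset ℕ} {u v w x y : ℕ}

theorem branchVerticesFarApart_of_pairDeficit_eq_zero (hT : ∀ x, 3 ≤ degN G x → x ∈ T)
    (h : ∀ x ∈ T, ∀ y ∈ T, pairDeficit n G x y = 0) : BranchVerticesFarApart G n := by
  intro x y hxy hx hy hr
  have := h x (hT x hx) y (hT y hy)
  rw [pairDeficit, if_pos ⟨hxy, hx, hy, hr⟩] at this
  omega

theorem pairDeficit_subdivideEdge_le (hfin : G.edgeSet.Finite) (huv : G.Adj u v)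
    (hw : G.neighborSet w = ∅) (hx : x ≠ w) (hy : y ≠ w) :
    pairDeficit n (G.subdivideEdge u v w) x y ≤ pairDeficit n G x y := by
  unfold pairDeficit
  rw [degN_subdivideEdge hfin huv hw hx, degN_subdivideEdge hfin huv hw hy]
  split_ifs with h' h
  · have := dist_le_dist_subdivideEdge huv hw hx hy
    omega
  · exact absurd ⟨h'.1, h'.2.1, h'.2.2.1, h'.2.2.2.of_subdivideEdge huv hw hx hy⟩ h
  all_goals exact Nat.zero_le _

theorem pairDeficit_subdivideEdge_lt (hfin : G.edgeSet.Finite) (hG : G.IsAcyclic)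
    (huv : G.Adj u v) (hw : G.neighborSet w = ∅) (hx : x ≠ w) (hy : y ≠ w)
    (h : pairDeficit n G x y ≠ 0) {P : G.Walk x y} (hP : P.IsPath) (he : s(u, v) ∈ P.edges) :
    pairDeficit n (G.subdivideEdge u v w) x y < pairDeficit n G x y := by
  have hc : x ≠ y ∧ 3 ≤ degN G x ∧ 3 ≤ degN G y ∧ G.Reachable x y := by
    by_contra hc
    exact h (by rw [pairDeficit, if_neg hc])
  have hc' : x ≠ y ∧ 3 ≤ degN (G.subdivideEdge u v w) x ∧ 3 ≤ degN (G.subdivideEdge u v w) y ∧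
      (G.subdivideEdge u v w).Reachable x y := by
    rw [degN_subdivideEdge hfin huv hw hx, degN_subdivideEdge hfin huv hw hy]
    exact ⟨hc.1, hc.2.1, hc.2.2.1, hc.2.2.2.subdivideEdge
      (huv.ne_of_neighborSet_eq_empty hw) (huv.symm.ne_of_neighborSet_eq_empty hw)⟩
  rw [pairDeficit, if_pos hc] at h
  rw [pairDeficit, pairDeficit, if_pos hc, if_pos hc']
  have := hG.dist_lt_dist_subdivideEdge huv hw hx hy hP he
  omega

theorem deficit_subdivideEdge_lt (hfin : G.edgeSet.Finite) (hG : G.IsAcyclic)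
    (huv : G.Adj u v) (hw : G.neighborSet w = ∅) (hwT : w ∉ T) (hx : x ∈ T) (hy : y ∈ T)
    (h : pairDeficit n G x y ≠ 0) {P : G.Walk x y} (hP : P.IsPath) (he : s(u, v) ∈ P.edges) :
    deficit n T (G.subdivideEdge u v w) < deficit n T G := by
  have hne : ∀ {z}, z ∈ T → z ≠ w := fun hz => ne_of_mem_of_not_mem hz hwT
  have hle : ∀ i ∈ T, ∀ j ∈ T,
      pairDeficit n (G.subdivideEdge u v w) i j ≤ pairDeficit n G i j :=
    fun i hi j hj => pairDeficit_subdivideEdge_le hfin huv hw (hne hi) (hne hj)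
  refine Finset.sum_lt_sum (fun i hi => Finset.sum_le_sum (hle i hi)) ⟨x, hx, ?_⟩
  exact Finset.sum_lt_sum (hle x hx) ⟨y, hy,
    pairDeficit_subdivideEdge_lt hfin hG huv hw (hne hx) (hne hy) h hP he⟩

end deficit

theorem exists_subdivision_branchVerticesFarApart_of_subset (n : ℕ) (T : Finset ℕ)
    {G : SimpleGraph ℕ} (hfin : G.edgeSet.Finite) (hG : G.IsAcyclic)
    (hT : ∀ x, 3 ≤ degN G x → x ∈ T) :
    ∃ G', IsSubdivision G G' ∧ G'.edgeSet.Finite ∧ BranchVerticesFarApart G' n := by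
  induction hk : deficit n T G using Nat.strong_induction_on generalizing G with
  | _ k ih =>
  by_cases h0 : ∀ x ∈ T, ∀ y ∈ T, pairDeficit n G x y = 0
  · exact ⟨G, .refl, hfin, branchVerticesFarApart_of_pairDeficit_eq_zero hT h0⟩
  push Not at h0
  obtain ⟨x, hx, y, hy, hxy⟩ := h0
  have hr : x ≠ y ∧ G.Reachable x y := by
    by_contra hc
    exact hxy (by rw [pairDeficit, if_neg fun h => hc ⟨h.1, h.2.2.2⟩])
  obtain ⟨P, hP, -⟩ := hr.2.exists_path_of_dist
  cases P with
  | nil => exact absurd rfl hr.1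
  | @cons _ c _ hxc P =>
  obtain ⟨w, hwT, hw⟩ := exists_notMem_neighborSet_eq_empty hfin T
  have hT' : ∀ z, 3 ≤ degN (G.subdivideEdge x c w) z → z ∈ T := by
    intro z hz
    by_cases hzw : z = w
    · rw [hzw, degN_subdivideEdge_self hxc hw] at hz
      omega
    · exact hT z (degN_subdivideEdge hfin hxc hw hzw ▸ hz)
  have hlt := deficit_subdivideEdge_lt hfin hG hxc hw hwT hx hy hxy hP (by simp)
  obtain ⟨G', hG'⟩ :=
    ih _ (hk ▸ hlt) (finite_edgeSet_subdivideEdge hfin) (hG.subdivideEdge hxc hw) hT' rfl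
  exact ⟨G', .head (elemSubdiv_subdivideEdge hxc hw) hG'.1, hG'.2⟩

theorem exists_subdivision_branchVerticesFarApart (n : ℕ) {G : SimpleGraph ℕ}
    (hfin : G.edgeSet.Finite) (hG : G.IsAcyclic) :
    ∃ G', IsSubdivision G G' ∧ G'.edgeSet.Finite ∧ BranchVerticesFarApart G' n := by
  refine exists_subdivision_branchVerticesFarApart_of_subset n
    (finite_support_of_finite_edgeSet hfin).toFinset hfin hG fun x hx => ?_
  obtain ⟨y, hy⟩ :=
    Set.nonempty_of_ncard_ne_zero (s := G.neighborSet x) (by unfold degN at hx; omega)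
  simpa using ⟨y, hy⟩

/-- If `H` is a (finite) forest with two distinct vertices of degree at least 3
in the same connected component, then some subdivision of `H` does not contain
`H` as a subgraph. -/
theorem exists_subdivision_not_containing (H : SimpleGraph ℕ)
    (hfin : H.edgeSet.Finite)
    (hforest : ∀ (v : ℕ) (c : H.Walk v v), ¬ c.IsCycle)
    (a b : ℕ) (hab : a ≠ b) (ha : 3 ≤ degN H a) (hb : 3 ≤ degN H b)
    (hreach : H.Reachable a b) :
    ∃ G : SimpleGraph ℕ, IsSubdivision H G ∧ ¬ SubgraphOf H G := by
  obtain ⟨G, hHG, hGfin, hfar⟩ :=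
    exists_subdivision_branchVerticesFarApart (H.dist a b) hfin hforest
  exact ⟨G, hHG, not_subgraphOf_of_branchVerticesFarApart hGfin hfar hab ha hb hreach⟩
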